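/- arXiv:2509.01639 — 7 statements merged into one kernel-verified Lean document; each statement's English description precedes it below -/
import Mathlib

section
/- Let Ψ be an invertible n×n real matrix whose symmetric part Ψ^s is invertible. Then the symmetric part (Ψ⁻¹)^s of Ψ⁻¹ is invertible, and ((Ψ⁻¹)^s)⁻¹ = Ψᵀ (Ψ^s)⁻¹ Ψ = Ψ^s − Ψ^a (Ψ^s)⁻¹ Ψ^a. -/
open Matrix

/-- The symmetric part of a square real matrix: `Mˢ = (M + Mᵀ)/2`. -/
noncomputable def symPart {n : ℕ} (M : Matrix (Fin n) (Fin n) ℝ) : Matrix (Fin n) (Fin n) ℝ :=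
  (2:ℝ)⁻¹ • (M + Mᵀ)

/-- The antisymmetric part of a square real matrix: `Mᵃ = (M - Mᵀ)/2`. -/
noncomputable def skewPart {n : ℕ} (M : Matrix (Fin n) (Fin n) ℝ) : Matrix (Fin n) (Fin n) ℝ :=
  (2:ℝ)⁻¹ • (M - Mᵀ)

/-! Since `Ψ⁻¹ + Ψ⁻ᵀ = Ψ⁻¹ (Ψ + Ψᵀ) Ψ⁻ᵀ`, the symmetric part of `Ψ⁻¹` is congruent to that of `Ψ`,
`(Ψ⁻¹)ˢ = Ψ⁻¹ Ψˢ Ψ⁻ᵀ`; inverting gives `Ψᵀ (Ψˢ)⁻¹ Ψ`, and substituting `Ψ = Ψˢ + Ψᵃ`,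
`Ψᵀ = Ψˢ - Ψᵃ` and expanding gives `Ψˢ - Ψᵃ (Ψˢ)⁻¹ Ψᵃ`. -/

section General

variable {ι α : Type*} [Fintype ι] [DecidableEq ι] [CommRing α]

theorem Matrix.inv_add_transpose_inv {A : Matrix ι ι α} (hA : IsUnit A) :
    A⁻¹ + Aᵀ⁻¹ = A⁻¹ * (A + Aᵀ) * Aᵀ⁻¹ := by
  have hdet : IsUnit A.det := (isUnit_iff_isUnit_det A).mp hA
  have hdetT : IsUnit Aᵀ.det := by rwa [det_transpose]
  rw [mul_add, add_mul, nonsing_inv_mul A hdet, one_mul,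
    mul_nonsing_inv_cancel_right _ _ hdetT, add_comm]

theorem Matrix.sub_mul_inv_mul_add {S : Matrix ι ι α} (hS : IsUnit S) (A : Matrix ι ι α) :
    (S - A) * S⁻¹ * (S + A) = S - A * S⁻¹ * A := by
  have hdet : IsUnit S.det := (isUnit_iff_isUnit_det S).mp hS
  rw [sub_mul, mul_nonsing_inv S hdet, sub_mul, one_mul, mul_add,
    nonsing_inv_mul_cancel_right S _ hdet]
  abel

end General

section SymSkew

variable {n : ℕ}

theorem symPart_add_skewPart (M : Matrix (Fin n) (Fin n) ℝ) : symPart M + skewPart M = M := by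
  unfold symPart skewPart
  module

theorem symPart_sub_skewPart (M : Matrix (Fin n) (Fin n) ℝ) : symPart M - skewPart M = Mᵀ := by
  unfold symPart skewPart
  module

theorem symPart_nonsing_inv {Ψ : Matrix (Fin n) (Fin n) ℝ} (hΨ : IsUnit Ψ) :
    symPart Ψ⁻¹ = Ψ⁻¹ * symPart Ψ * Ψᵀ⁻¹ := by
  rw [symPart, symPart, transpose_nonsing_inv, inv_add_transpose_inv hΨ, Matrix.mul_smul,
    Matrix.smul_mul]

theorem transpose_mul_inv_symPart_mul {Ψ : Matrix (Fin n) (Fin n) ℝ} (hΨs : IsUnit (symPart Ψ)) :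
    Ψᵀ * (symPart Ψ)⁻¹ * Ψ = symPart Ψ - skewPart Ψ * (symPart Ψ)⁻¹ * skewPart Ψ := by
  have h := sub_mul_inv_mul_add hΨs (skewPart Ψ)
  rwa [symPart_add_skewPart, symPart_sub_skewPart] at h

end SymSkew

/-- For an invertible real matrix `Ψ` with invertible symmetric part `Ψˢ`, the symmetric part
`(Ψ⁻¹)ˢ` of `Ψ⁻¹` is invertible, and
`((Ψ⁻¹)ˢ)⁻¹ = Ψᵀ (Ψˢ)⁻¹ Ψ = Ψˢ − Ψᵃ (Ψˢ)⁻¹ Ψᵃ`. -/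
theorem stmt2 {n : ℕ} (Ψ : Matrix (Fin n) (Fin n) ℝ) (hΨ : IsUnit Ψ)
    (hΨs : IsUnit (symPart Ψ)) :
    IsUnit (symPart Ψ⁻¹) ∧
    (symPart Ψ⁻¹)⁻¹ = Ψᵀ * (symPart Ψ)⁻¹ * Ψ ∧
    (symPart Ψ⁻¹)⁻¹ = symPart Ψ - skewPart Ψ * (symPart Ψ)⁻¹ * skewPart Ψ := by
  have hΨT : IsUnit Ψᵀ := (isUnit_transpose Ψ).mpr hΨ
  have hcongr := symPart_nonsing_inv hΨ
  have hinv : (symPart Ψ⁻¹)⁻¹ = Ψᵀ * (symPart Ψ)⁻¹ * Ψ := by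
    rw [hcongr, Matrix.mul_inv_rev, Matrix.mul_inv_rev,
      nonsing_inv_nonsing_inv _ ((isUnit_iff_isUnit_det _).mp hΨT),
      nonsing_inv_nonsing_inv _ ((isUnit_iff_isUnit_det _).mp hΨ), mul_assoc]
  refine ⟨?_, hinv, hinv.trans (transpose_mul_inv_symPart_mul hΨs)⟩
  rw [hcongr]
  exact ((isUnit_nonsing_inv_iff.mpr hΨ).mul hΨs).mul (isUnit_nonsing_inv_iff.mpr hΨT)
end

section
/- Let S be a symmetric positive definite n×n real matrix and A an invertible antisymmetric n×n real matrix. Then both S + A and A S⁻¹ A + A are invertible, and the symmetric parts of their inverses satisfy ((S + A)⁻¹)^s = −((A S⁻¹ A + A)⁻¹)^s. -/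
/-!
Since `A S⁻¹ A + A = A S⁻¹ (S + A)`, its inverse is `(S + A)⁻¹ S A⁻¹ = A⁻¹ - (S + A)⁻¹`.
The inverse of an antisymmetric matrix is antisymmetric, so `A⁻¹` has no symmetric part, and the
identity follows by linearity of `symPart`. Invertibility of `S + A` holds because the quadratic
form of `A` vanishes, so `xᵀ (S + A) x = xᵀ S x > 0` for `x ≠ 0`.
-/

open Matrix

namespace Matrix

variable {ι R : Type*} [Fintype ι]

theorem dotProduct_mulVec_self_eq_zero_of_transpose_eq_neg [CommRing R] [NoZeroDivisors R]
    [CharZero R] {A : Matrix ι ι R} (hA : Aᵀ = -A) (x : ι → R) : x ⬝ᵥ A *ᵥ x = 0 := by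
  have h : x ⬝ᵥ A *ᵥ x = -(x ⬝ᵥ A *ᵥ x) := by
    conv_lhs => rw [dotProduct_mulVec, ← mulVec_transpose, hA, dotProduct_comm]
    rw [neg_mulVec, dotProduct_neg]
  exact self_eq_neg.mp h

variable [DecidableEq ι]

theorem PosDef.isUnit_add_of_transpose_eq_neg {S A : Matrix ι ι ℝ} (hS : S.PosDef)
    (hA : Aᵀ = -A) : IsUnit (S + A) := by
  rw [isUnit_iff_isUnit_det, isUnit_iff_ne_zero]
  intro hdet
  obtain ⟨x, hx, hker⟩ := exists_mulVec_eq_zero_iff.mpr hdet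
  have hpos : 0 < x ⬝ᵥ S *ᵥ x := by simpa using hS.dotProduct_mulVec_pos hx
  have hzero : x ⬝ᵥ (S + A) *ᵥ x = 0 := by rw [hker, dotProduct_zero]
  rw [add_mulVec, dotProduct_add, dotProduct_mulVec_self_eq_zero_of_transpose_eq_neg hA,
    add_zero] at hzero
  exact hpos.ne' hzero

variable [CommRing R]

theorem inv_neg (A : Matrix ι ι R) : (-A)⁻¹ = -A⁻¹ := by
  by_cases h : IsUnit A.det
  · exact inv_eq_right_inv (by rw [neg_mul_neg, mul_nonsing_inv _ h])
  · have h' : ¬IsUnit (-A).det := by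
      rwa [det_neg, IsUnit.mul_iff, and_iff_right (isUnit_neg_one.pow _)]
    rw [nonsing_inv_apply_not_isUnit _ h, nonsing_inv_apply_not_isUnit _ h', neg_zero]

theorem transpose_inv_eq_neg_of_transpose_eq_neg {A : Matrix ι ι R} (hA : Aᵀ = -A) :
    A⁻¹ᵀ = -A⁻¹ := by
  rw [transpose_nonsing_inv, hA, inv_neg]

theorem mul_inv_mul_add_self {S : Matrix ι ι R} (hS : IsUnit S) (A : Matrix ι ι R) :
    A * S⁻¹ * A + A = A * S⁻¹ * (S + A) := by
  rw [Matrix.mul_add, Matrix.mul_assoc A S⁻¹ S,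
    nonsing_inv_mul S ((isUnit_iff_isUnit_det S).mp hS), Matrix.mul_one, add_comm]

theorem inv_mul_inv_mul_add {S A : Matrix ι ι R} (hS : IsUnit S) (hA : IsUnit A)
    (hSA : IsUnit (S + A)) : (A * S⁻¹ * (S + A))⁻¹ = A⁻¹ - (S + A)⁻¹ := by
  rw [isUnit_iff_isUnit_det] at hS hA hSA
  have hS_eq : S * A⁻¹ = (S + A) * A⁻¹ - 1 := by
    rw [add_mul, mul_nonsing_inv A hA, add_sub_cancel_right]
  rw [Matrix.mul_inv_rev, Matrix.mul_inv_rev, nonsing_inv_nonsing_inv S hS, hS_eq, Matrix.mul_sub,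
    ← Matrix.mul_assoc, nonsing_inv_mul _ hSA, Matrix.one_mul, Matrix.mul_one]

end Matrix

theorem symPart_sub {n : ℕ} (M N : Matrix (Fin n) (Fin n) ℝ) :
    symPart (M - N) = symPart M - symPart N := by
  simp only [symPart, transpose_sub, ← smul_sub]
  abel_nf

theorem symPart_eq_zero_of_transpose_eq_neg {n : ℕ} {M : Matrix (Fin n) (Fin n) ℝ}
    (hM : Mᵀ = -M) : symPart M = 0 := by
  rw [symPart, hM, add_neg_cancel, smul_zero]

/-- Let `S` be a symmetric positive definite real matrix and `A` an invertible antisymmetric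
matrix.  Then both `S + A` and `A S⁻¹ A + A` are invertible, and the symmetric parts of their
inverses satisfy `((S + A)⁻¹)ˢ = −((A S⁻¹ A + A)⁻¹)ˢ`. -/
theorem stmt4 {n : ℕ} (S A : Matrix (Fin n) (Fin n) ℝ)
    (hS : S.PosDef) (hA : Aᵀ = -A) (hAu : IsUnit A) :
    IsUnit (S + A) ∧
    IsUnit (A * S⁻¹ * A + A) ∧
    symPart (S + A)⁻¹ = -symPart (A * S⁻¹ * A + A)⁻¹ := by
  have hSA : IsUnit (S + A) := hS.isUnit_add_of_transpose_eq_neg hA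
  rw [mul_inv_mul_add_self hS.isUnit A]
  refine ⟨hSA, (hAu.mul (isUnit_nonsing_inv_iff.mpr hS.isUnit)).mul hSA, ?_⟩
  rw [inv_mul_inv_mul_add hS.isUnit hAu hSA, symPart_sub,
    symPart_eq_zero_of_transpose_eq_neg (transpose_inv_eq_neg_of_transpose_eq_neg hA), zero_sub,
    neg_neg]
end

section
/- Let S be a symmetric positive definite n×n real matrix and A an antisymmetric n×n real matrix. Then S + A is invertible and the matrix S⁻¹ − ((S+A)⁻¹)^s is positive semidefinite, where ((S+A)⁻¹)^s denotes the symmetric part of (S+A)⁻¹. -/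
/-!
Write `B = S + A`, so that `Bᵀ = S - A`. Congruence by `B` turns the symmetric part of `B⁻¹`
into the symmetric part `S` of `B`, and turns `S⁻¹` into `(S + A) S⁻¹ (S - A) = S + Aᵀ S⁻¹ A`.
Hence `S⁻¹ - (B⁻¹)ˢ = B⁻¹ (Aᵀ S⁻¹ A) B⁻ᵀ`, which is positive semidefinite because `S⁻¹` is.
Invertibility of `B` holds because `B + Bᵀ = 2S` is positive definite, so `xᵀ B x > 0` for `x ≠ 0`.
-/

open Matrix

namespace Matrix

variable {m : Type*} [Fintype m] [DecidableEq m]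

theorem isUnit_of_posDef_add_transpose {M : Matrix m m ℝ} (hM : (M + Mᵀ).PosDef) : IsUnit M := by
  rw [isUnit_iff_isUnit_det, isUnit_iff_ne_zero]
  intro hdet
  obtain ⟨x, hx0, hx⟩ := exists_mulVec_eq_zero_iff.2 hdet
  have hquad : x ⬝ᵥ (M + Mᵀ) *ᵥ x = 0 := by
    rw [add_mulVec, dotProduct_add, mulVec_transpose, dotProduct_comm x (x ᵥ* M),
      ← dotProduct_mulVec, hx, dotProduct_zero, add_zero]
  simpa [hquad] using hM.dotProduct_mulVec_pos hx0

variable {R : Type*} [CommRing R]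

theorem nonsing_inv_mul_mul_transpose_cancel {B : Matrix m m R} (hB : IsUnit B.det)
    (X : Matrix m m R) : B⁻¹ * (B * X * Bᵀ) * B⁻¹ᵀ = X := by
  have hBt : IsUnit Bᵀ.det := by rwa [det_transpose]
  simp only [transpose_nonsing_inv, Matrix.mul_assoc, nonsing_inv_mul_cancel_left B _ hB,
    mul_nonsing_inv _ hBt, Matrix.mul_one]

theorem add_mul_inv_mul_transpose_add {S A : Matrix m m R} (hS : Sᵀ = S) (hA : Aᵀ = -A)
    (hSdet : IsUnit S.det) : (S + A) * S⁻¹ * (S + A)ᵀ = S + Aᵀ * S⁻¹ * A := by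
  rw [transpose_add, hS, hA]
  simp only [Matrix.add_mul, Matrix.mul_add, Matrix.mul_neg, Matrix.neg_mul,
    mul_nonsing_inv _ hSdet, Matrix.one_mul, Matrix.mul_assoc, nonsing_inv_mul _ hSdet,
    Matrix.mul_one]
  abel

end Matrix

theorem mul_symPart_inv_mul_transpose {n : ℕ} {B : Matrix (Fin n) (Fin n) ℝ}
    (hB : IsUnit B.det) : B * symPart B⁻¹ * Bᵀ = symPart B := by
  have hBt : IsUnit Bᵀ.det := by rwa [det_transpose]
  rw [symPart, symPart, transpose_nonsing_inv, Matrix.mul_smul, Matrix.smul_mul, Matrix.mul_add,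
    mul_nonsing_inv _ hB, Matrix.add_mul, Matrix.one_mul, Matrix.mul_assoc,
    nonsing_inv_mul _ hBt, Matrix.mul_one, add_comm]

theorem symPart_add_of_transpose_eq_neg {n : ℕ} {S A : Matrix (Fin n) (Fin n) ℝ} (hS : Sᵀ = S)
    (hA : Aᵀ = -A) : symPart (S + A) = S := by
  rw [symPart, transpose_add, hS, hA]
  module

theorem inv_sub_symPart_inv_add {n : ℕ} {S A : Matrix (Fin n) (Fin n) ℝ} (hS : Sᵀ = S)
    (hA : Aᵀ = -A) (hSdet : IsUnit S.det) (hBdet : IsUnit (S + A).det) :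
    S⁻¹ - symPart (S + A)⁻¹ = (S + A)⁻¹ * (Aᵀ * S⁻¹ * A) * (S + A)⁻¹ᵀ := by
  have hcongr : (S + A) * (S⁻¹ - symPart (S + A)⁻¹) * (S + A)ᵀ = Aᵀ * S⁻¹ * A := by
    rw [Matrix.mul_sub, Matrix.sub_mul, add_mul_inv_mul_transpose_add hS hA hSdet,
      mul_symPart_inv_mul_transpose hBdet, symPart_add_of_transpose_eq_neg hS hA,
      add_sub_cancel_left]
  rw [← hcongr, nonsing_inv_mul_mul_transpose_cancel hBdet]

/-- For `S` symmetric positive definite and `A` antisymmetric, `S + A` is invertible and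
`S⁻¹ − ((S+A)⁻¹)ˢ` is positive semidefinite. -/
theorem stmt8 {n : ℕ} (S A : Matrix (Fin n) (Fin n) ℝ)
    (hS : S.PosDef) (hA : Aᵀ = -A) :
    IsUnit (S + A) ∧ (S⁻¹ - symPart (S + A)⁻¹).PosSemidef := by
  have hSt : Sᵀ = S := hS.1
  have hB : IsUnit (S + A) := by
    apply isUnit_of_posDef_add_transpose
    convert hS.add hS using 1
    rw [transpose_add, hSt, hA]
    abel
  refine ⟨hB, ?_⟩
  have hSdet : IsUnit S.det := (isUnit_iff_isUnit_det S).1 hS.isUnit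
  rw [inv_sub_symPart_inv_add hSt hA hSdet ((isUnit_iff_isUnit_det _).1 hB)]
  have hmid : (Aᵀ * S⁻¹ * A).PosSemidef := by
    simpa using hS.inv.posSemidef.mul_mul_conjTranspose_same Aᵀ
  simpa using hmid.mul_mul_conjTranspose_same (S + A)⁻¹
end

section
/- Let U, V ⊆ ℝⁿ be open sets, let u : U → ℝ be a C² function with Hess u(x) positive definite for all x ∈ U, and suppose ∇u maps U bijectively onto V with C¹ inverse G : V → U. Let φ : V → ℝ be the Legendre transform φ(y) = ⟨G(y), y⟩ − u(G(y)). Suppose there are b, c ∈ ℝⁿ and κ ∈ ℝ such that ⟨b, x⟩ = ⟨c, ∇u(x)⟩ + log det Hess u(x) + κ for all x ∈ U. Then ⟨c, y⟩ = ⟨b, ∇φ(y)⟩ + log det Hess φ(y) − κ for all y ∈ V; that is, the Legendre transform satisfies the same steady Kähler–Ricci soliton Monge–Ampère equation with the roles of the constants b and c interchanged. -/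
/-!
Differentiating `φ(y) = ⟨G y, y⟩ − u (G y)` the terms containing the derivative of `G` cancel,
because `∇u (G y) = y`; hence `∇φ = G`. So `Hess φ (y)` is the Jacobian of `G` at `y`, which by the
chain rule applied to `∇u ∘ G = id` is the inverse of `Hess u (G y)`, and
`log det Hess φ (y) = −log det Hess u (G y)`. The equation for `u` at `x = G y`, where `∇u x = y`
and `∇φ y = x`, is then the dual equation.
-/

open Matrix

/-- The gradient of `u : ℝⁿ → ℝ`: `(grad u x) i` is the `i`-th partial derivative of `u` at
`x` (junk if `u` is not differentiable at `x`). -/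
noncomputable def grad {n : ℕ} (u : (Fin n → ℝ) → ℝ) (x : Fin n → ℝ) : Fin n → ℝ :=
  fun i => fderiv ℝ u x (Pi.single i 1)

/-- The Hessian matrix of second partial derivatives of `u : ℝⁿ → ℝ` at `x`. -/
noncomputable def hess {n : ℕ} (u : (Fin n → ℝ) → ℝ) (x : Fin n → ℝ) :
    Matrix (Fin n) (Fin n) ℝ :=
  fun i j => fderiv ℝ (fun y => fderiv ℝ u y (Pi.single j 1)) x (Pi.single i 1)

open Filter Topology

section

variable {n : ℕ}

theorem fderiv_apply_eq_dotProduct_grad (u : (Fin n → ℝ) → ℝ) (x h : Fin n → ℝ) :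
    fderiv ℝ u x h = h ⬝ᵥ grad u x := by
  conv_lhs => rw [← Finset.univ_sum_single h]
  simp only [map_sum, dotProduct, grad]
  refine Finset.sum_congr rfl fun i _ => ?_
  rw [← smul_eq_mul, ← map_smul, ← Pi.single_smul, smul_eq_mul, mul_one]

theorem grad_eq_of_fderiv_apply_eq_dotProduct {u : (Fin n → ℝ) → ℝ} {x a : Fin n → ℝ}
    (h : ∀ v, fderiv ℝ u x v = a ⬝ᵥ v) : grad u x = a := by
  funext i
  rw [grad, h, dotProduct_single_one]

theorem contDiffOn_grad {m : ℕ∞} {u : (Fin n → ℝ) → ℝ} {s : Set (Fin n → ℝ)}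
    (hu : ContDiffOn ℝ (m + 1) u s) (hs : IsOpen s) : ContDiffOn ℝ m (grad u) s :=
  contDiffOn_pi.2 fun _ => (hu.fderiv_of_isOpen hs le_rfl).clm_apply contDiffOn_const

theorem hess_eq_transpose_toMatrix' {u : (Fin n → ℝ) → ℝ} {F : (Fin n → ℝ) → Fin n → ℝ}
    {F' : (Fin n → ℝ) →L[ℝ] Fin n → ℝ} {x : Fin n → ℝ} (hF : grad u =ᶠ[𝓝 x] F)
    (hF' : HasFDerivAt F F' x) : hess u x = (LinearMap.toMatrix' (F' : (Fin n → ℝ) →ₗ[ℝ] _))ᵀ := by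
  ext i j
  have hj : (fun y => fderiv ℝ u y (Pi.single j 1)) =ᶠ[𝓝 x] fun y => F y j :=
    hF.mono fun y hy => congrFun hy j
  rw [hess, hj.fderiv_eq, (hasFDerivAt_pi'.1 hF' j).fderiv]
  simp [LinearMap.toMatrix'_apply]

theorem grad_legendre_eq {u : (Fin n → ℝ) → ℝ} {G : (Fin n → ℝ) → Fin n → ℝ} {φ : (Fin n → ℝ) → ℝ}
    {y : Fin n → ℝ} (hu : DifferentiableAt ℝ u (G y)) (hG : DifferentiableAt ℝ G y)
    (hGy : grad u (G y) = y) (hφ : φ =ᶠ[𝓝 y] fun z => G z ⬝ᵥ z - u (G z)) :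
    grad φ y = G y := by
  have hpair : HasFDerivAt (fun z => G z ⬝ᵥ z)
      (∑ i, (G y i • ContinuousLinearMap.proj i +
        y i • (ContinuousLinearMap.proj i).comp (fderiv ℝ G y))) y :=
    HasFDerivAt.fun_sum fun i _ =>
      (hasFDerivAt_pi'.1 hG.hasFDerivAt i).mul (hasFDerivAt_apply i y)
  have hφ' := (hpair.sub (hu.hasFDerivAt.comp y hG.hasFDerivAt)).congr_of_eventuallyEq hφ
  refine grad_eq_of_fderiv_apply_eq_dotProduct fun v => ?_
  rw [hφ'.fderiv]
  simp [fderiv_apply_eq_dotProduct_grad, hGy, dotProduct, Finset.sum_add_distrib, mul_comm]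

theorem hess_mul_hess_eq_one {u φ : (Fin n → ℝ) → ℝ} {G : (Fin n → ℝ) → Fin n → ℝ}
    {y : Fin n → ℝ} (hφ : grad φ =ᶠ[𝓝 y] G) (hG : DifferentiableAt ℝ G y)
    (hu : DifferentiableAt ℝ (grad u) (G y)) (hinv : grad u ∘ G =ᶠ[𝓝 y] id) :
    hess φ y * hess u (G y) = 1 := by
  have hchain : (fderiv ℝ (grad u) (G y)).comp (fderiv ℝ G y) = ContinuousLinearMap.id ℝ _ :=
    (hu.hasFDerivAt.comp y hG.hasFDerivAt).unique
      ((hasFDerivAt_id y).congr_of_eventuallyEq hinv)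
  rw [hess_eq_transpose_toMatrix' hφ hG.hasFDerivAt,
    hess_eq_transpose_toMatrix' EventuallyEq.rfl hu.hasFDerivAt, ← transpose_mul,
    ← LinearMap.toMatrix'_comp, ← ContinuousLinearMap.toLinearMap_comp, hchain]
  simp

end

theorem stmt11_general {n : ℕ} (U V : Set (Fin n → ℝ)) (hU : IsOpen U) (hV : IsOpen V)
    (u : (Fin n → ℝ) → ℝ) (hu : ContDiffOn ℝ 2 u U)
    (G : (Fin n → ℝ) → (Fin n → ℝ)) (hG : ContDiffOn ℝ 1 G V)
    (hGU : ∀ y ∈ V, G y ∈ U)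
    (hright : ∀ y ∈ V, grad u (G y) = y)
    (φ : (Fin n → ℝ) → ℝ) (hφ : ∀ y ∈ V, φ y = G y ⬝ᵥ y - u (G y))
    (b c : Fin n → ℝ) (κ : ℝ)
    (hMA : ∀ x ∈ U, b ⬝ᵥ x = c ⬝ᵥ grad u x + Real.log (hess u x).det + κ) :
    ∀ y ∈ V, c ⬝ᵥ y = b ⬝ᵥ grad φ y + Real.log (hess φ y).det - κ := by
  have hGdiff : ∀ y ∈ V, DifferentiableAt ℝ G y := fun y hy =>
    (hG.differentiableOn one_ne_zero).differentiableAt (hV.mem_nhds hy)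
  have hgradφ : ∀ y ∈ V, grad φ =ᶠ[𝓝 y] G := fun y hy =>
    Filter.mem_of_superset (hV.mem_nhds hy) fun z hz =>
      grad_legendre_eq ((hu.differentiableOn two_ne_zero).differentiableAt (hU.mem_nhds (hGU z hz)))
        (hGdiff z hz) (hright z hz) (Filter.mem_of_superset (hV.mem_nhds hz) hφ)
  intro y hy
  have hx := hGU y hy
  have hgradu : DifferentiableAt ℝ (grad u) (G y) :=
    ((contDiffOn_grad (m := 1) hu hU).differentiableOn one_ne_zero).differentiableAt
      (hU.mem_nhds hx)
  have hinv : grad u ∘ G =ᶠ[𝓝 y] id := Filter.mem_of_superset (hV.mem_nhds hy) hright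
  have hdet : (hess φ y).det = (hess u (G y)).det⁻¹ := eq_inv_of_mul_eq_one_left <| by
    rw [← det_mul, hess_mul_hess_eq_one (hgradφ y hy) (hGdiff y hy) hgradu hinv, det_one]
  have hMAx := hMA (G y) hx
  rw [hright y hy] at hMAx
  rw [(hgradφ y hy).eq_of_nhds, hdet, Real.log_inv]
  linarith

/-- Legendre duality for the steady Kähler–Ricci soliton Monge–Ampère equation: if `u` is `C²`
on the open set `U` with positive definite Hessian, its gradient maps `U` bijectively onto the
open set `V` with `C¹` inverse `G`, `φ(y) = ⟨G y, y⟩ − u (G y)` is the Legendre transform, and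
`⟨b, x⟩ = ⟨c, ∇u(x)⟩ + log det Hess u(x) + κ` on `U`, then
`⟨c, y⟩ = ⟨b, ∇φ(y)⟩ + log det Hess φ(y) − κ` on `V`. -/
theorem stmt11 {n : ℕ} (U V : Set (Fin n → ℝ)) (hU : IsOpen U) (hV : IsOpen V)
    (u : (Fin n → ℝ) → ℝ) (hu : ContDiffOn ℝ 2 u U)
    (hpos : ∀ x ∈ U, (hess u x).PosDef)
    (G : (Fin n → ℝ) → (Fin n → ℝ)) (hG : ContDiffOn ℝ 1 G V)
    (hmaps : ∀ x ∈ U, grad u x ∈ V)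
    (hGU : ∀ y ∈ V, G y ∈ U)
    (hleft : ∀ x ∈ U, G (grad u x) = x)
    (hright : ∀ y ∈ V, grad u (G y) = y)
    (φ : (Fin n → ℝ) → ℝ) (hφ : ∀ y ∈ V, φ y = G y ⬝ᵥ y - u (G y))
    (b c : Fin n → ℝ) (κ : ℝ)
    (hMA : ∀ x ∈ U, b ⬝ᵥ x = c ⬝ᵥ grad u x + Real.log (hess u x).det + κ) :
    ∀ y ∈ V, c ⬝ᵥ y = b ⬝ᵥ grad φ y + Real.log (hess φ y).det - κ :=
  stmt11_general U V hU hV u hu G hG hGU hright φ hφ b c κ hMA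
end

section
/- Let V ⊆ ℝⁿ be open, let φ : V → ℝ be a C² function with Hess φ(y) positive definite for all y ∈ V, and suppose there are b, c ∈ ℝⁿ and κ ∈ ℝ such that ⟨c, y⟩ = ⟨b, ∇φ(y)⟩ + log det Hess φ(y) + κ for all y ∈ V. Let A be an invertible antisymmetric n×n real matrix, and define φ_A(x) = φ(Ax) on the open set A⁻¹(V) = {x : Ax ∈ V}. Then Hess φ_A(x) is positive definite for all x ∈ A⁻¹(V) (so φ_A is strictly convex on convex subsets), and ⟨−Ac, x⟩ = ⟨A⁻¹b, ∇φ_A(x)⟩ + log det Hess φ_A(x) + κ − log((det A)²) for all x ∈ A⁻¹(V); that is, φ_A satisfies the steady Kähler–Ricci soliton Monge–Ampère equation with soliton constants −Ac and A⁻¹b. -/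
/-!
`φ_A = φ ∘ A` is a linear change of variables, so `∇φ_A(x) = Aᵀ ∇φ(Ax)` and
`Hess φ_A(x) = Aᵀ Hess φ(Ax) A`. The latter is positive definite because `A` is invertible, and
its log-determinant exceeds that of `Hess φ(Ax)` by `log((det A)²)`. Antisymmetry of `A` turns
`⟨c, Ax⟩` into `⟨-Ac, x⟩`, and `⟨A⁻¹b, Aᵀ g⟩ = ⟨b, g⟩`, so the equation for `φ` at `Ax` becomes
the equation for `φ_A` at `x`.
-/

open Matrix

open Filter Topology

section Calculus

variable {n : ℕ} {u : (Fin n → ℝ) → ℝ} {x : Fin n → ℝ} {A : Matrix (Fin n) (Fin n) ℝ}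

lemma fderiv_apply_eq_grad_dotProduct (v : Fin n → ℝ) : fderiv ℝ u x v = grad u x ⬝ᵥ v := by
  conv_lhs => rw [pi_eq_sum_univ' v]
  simp [grad, dotProduct, mul_comm]

lemma fderiv_fderiv_apply {E : Type*} [NormedAddCommGroup E] [NormedSpace ℝ E] {u : E → ℝ}
    {y : E} (h : DifferentiableAt ℝ (fderiv ℝ u) y) (v w : E) :
    fderiv ℝ (fun z => fderiv ℝ u z w) y v = fderiv ℝ (fderiv ℝ u) y v w :=
  congrArg (· v) ((ContinuousLinearMap.apply ℝ ℝ w).hasFDerivAt.comp y h.hasFDerivAt).fderiv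

lemma hess_eq_toMatrix₂' (h : DifferentiableAt ℝ (fderiv ℝ u) x) :
    hess u x = LinearMap.toMatrix₂' ℝ (fderiv ℝ (fderiv ℝ u) x).toLinearMap₁₂ := by
  ext i j
  exact fderiv_fderiv_apply h _ _

lemma fderiv_comp_mulVec_apply (hu : DifferentiableAt ℝ u (A *ᵥ x)) (v : Fin n → ℝ) :
    fderiv ℝ (fun z => u (A *ᵥ z)) x v = fderiv ℝ u (A *ᵥ x) (A *ᵥ v) :=
  congrArg (· v) (hu.hasFDerivAt.comp x (toLin' A).toContinuousLinearMap.hasFDerivAt).fderiv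

lemma grad_comp_mulVec (hu : DifferentiableAt ℝ u (A *ᵥ x)) :
    grad (fun z => u (A *ᵥ z)) x = Aᵀ *ᵥ grad u (A *ᵥ x) := by
  ext i
  rw [grad, fderiv_comp_mulVec_apply hu, fderiv_apply_eq_grad_dotProduct, dotProduct_mulVec,
    dotProduct_single_one, mulVec_transpose]

lemma hess_comp_mulVec (hu : ∀ᶠ y in 𝓝 (A *ᵥ x), DifferentiableAt ℝ u y)
    (hu' : DifferentiableAt ℝ (fderiv ℝ u) (A *ᵥ x)) :
    hess (fun z => u (A *ᵥ z)) x = Aᵀ * hess u (A *ᵥ x) * A := by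
  ext i j
  have hA : Tendsto (A *ᵥ ·) (𝓝 x) (𝓝 (A *ᵥ x)) :=
    (toLin' A).toContinuousLinearMap.continuous.tendsto x
  have hev : (fun z => fderiv ℝ (fun z => u (A *ᵥ z)) z (Pi.single j 1)) =ᶠ[𝓝 x]
      fun z => fderiv ℝ u (A *ᵥ z) (A *ᵥ Pi.single j 1) :=
    (hA.eventually hu).mono fun z hz => fderiv_comp_mulVec_apply hz _
  have hg : DifferentiableAt ℝ (fun y => fderiv ℝ u y (A *ᵥ Pi.single j 1)) (A *ᵥ x) :=
    hu'.clm_apply (differentiableAt_const _)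
  have hcompl := LinearMap.toMatrix₂'_compl₁₂ (fderiv ℝ (fderiv ℝ u) (A *ᵥ x)).toLinearMap₁₂
    (toLin' A) (toLin' A)
  rw [LinearMap.toMatrix'_toLin'] at hcompl
  rw [hess, hev.fderiv_eq, fderiv_comp_mulVec_apply hg, fderiv_fderiv_apply hu',
    hess_eq_toMatrix₂' hu', ← hcompl]
  simp

end Calculus

section LinearAlgebra

variable {ι R : Type*} [Fintype ι] [CommRing R] {A : Matrix ι ι R}

lemma neg_mulVec_dotProduct_of_transpose_eq_neg (hA : Aᵀ = -A) (c x : ι → R) :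
    -(A *ᵥ c) ⬝ᵥ x = c ⬝ᵥ A *ᵥ x := by
  rw [dotProduct_mulVec, ← mulVec_transpose, hA, neg_mulVec]

lemma inv_mulVec_dotProduct_transpose_mulVec [DecidableEq ι] (hA : IsUnit A) (b g : ι → R) :
    A⁻¹ *ᵥ b ⬝ᵥ Aᵀ *ᵥ g = b ⬝ᵥ g := by
  rw [dotProduct_mulVec, vecMul_transpose, mulVec_mulVec,
    mul_nonsing_inv A ((isUnit_iff_isUnit_det A).mp hA), one_mulVec]

end LinearAlgebra

section RealMatrix

variable {ι : Type*} [Fintype ι] [DecidableEq ι] {A H : Matrix ι ι ℝ}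

lemma Matrix.PosDef.transpose_mul_mul_of_isUnit (hH : H.PosDef) (hA : IsUnit A) :
    (Aᵀ * H * A).PosDef := by
  simpa using hH.conjTranspose_mul_mul_same (mulVec_injective_of_isUnit hA)

lemma log_det_transpose_mul_mul (hH : H.PosDef) (hA : IsUnit A) :
    Real.log (Aᵀ * H * A).det = Real.log (A.det ^ 2) + Real.log H.det := by
  have hdet : A.det ≠ 0 := ((isUnit_iff_isUnit_det A).mp hA).ne_zero
  rw [det_mul, det_mul, det_transpose, mul_right_comm, ← sq,
    Real.log_mul (pow_ne_zero 2 hdet) hH.det_pos.ne']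

end RealMatrix

/-- If `φ` is `C²` with positive definite Hessian on the open set `V` and satisfies the steady
Kähler–Ricci soliton Monge–Ampère equation
`⟨c, y⟩ = ⟨b, ∇φ(y)⟩ + log det Hess φ(y) + κ` on `V`, and `A` is an invertible antisymmetric
matrix, then `φ_A(x) := φ(Ax)`, defined on `{x | Ax ∈ V}`, has positive definite Hessian and
satisfies
`⟨−Ac, x⟩ = ⟨A⁻¹b, ∇φ_A(x)⟩ + log det Hess φ_A(x) + κ − log((det A)²)` there, i.e. it is a
soliton potential with constants `−Ac` and `A⁻¹b`. -/
theorem stmt12 {n : ℕ} (V : Set (Fin n → ℝ)) (hV : IsOpen V)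
    (φ : (Fin n → ℝ) → ℝ) (hφ : ContDiffOn ℝ 2 φ V)
    (hpos : ∀ y ∈ V, (hess φ y).PosDef)
    (b c : Fin n → ℝ) (κ : ℝ)
    (hMA : ∀ y ∈ V, c ⬝ᵥ y = b ⬝ᵥ grad φ y + Real.log (hess φ y).det + κ)
    (A : Matrix (Fin n) (Fin n) ℝ) (hA : Aᵀ = -A) (hAu : IsUnit A)
    (φA : (Fin n → ℝ) → ℝ) (hφA : ∀ x, φA x = φ (A.mulVec x)) :
    ∀ x, A.mulVec x ∈ V →
      (hess φA x).PosDef ∧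
      (-(A.mulVec c)) ⬝ᵥ x =
        (A⁻¹.mulVec b) ⬝ᵥ grad φA x + Real.log (hess φA x).det + κ
          - Real.log (A.det ^ 2) := by
  intro x hx
  obtain rfl : φA = fun z => φ (A *ᵥ z) := funext hφA
  have hdiff : ∀ᶠ y in 𝓝 (A *ᵥ x), DifferentiableAt ℝ φ y :=
    eventually_of_mem (hV.mem_nhds hx) fun y hy =>
      (hφ.contDiffAt (hV.mem_nhds hy)).differentiableAt two_ne_zero
  have hdiff' : DifferentiableAt ℝ (fderiv ℝ φ) (A *ᵥ x) :=
    ((hφ.contDiffAt (hV.mem_nhds hx)).fderiv_right one_add_one_eq_two.le).differentiableAt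
      one_ne_zero
  rw [hess_comp_mulVec hdiff hdiff', grad_comp_mulVec hdiff.self_of_nhds]
  refine ⟨(hpos _ hx).transpose_mul_mul_of_isUnit hAu, ?_⟩
  rw [neg_mulVec_dotProduct_of_transpose_eq_neg hA, inv_mulVec_dotProduct_transpose_mulVec hAu,
    log_det_transpose_mul_mul (hpos _ hx) hAu, hMA _ hx]
  ring
end

section
/- Let V ⊆ ℝⁿ be open, let φ : V → ℝ be a C² function with Hess φ(y) positive definite for all y ∈ V, and suppose there are b, c ∈ ℝⁿ and κ ∈ ℝ such that ⟨c, y⟩ = ⟨b, ∇φ(y)⟩ + log det Hess φ(y) + κ for all y ∈ V. Then the function y ↦ log det Hess φ(y) has a directional derivative in the direction b at every y ∈ V, equal to ⟨b, c⟩ − ⟨Hess φ(y) b, b⟩. -/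
open Matrix

/-!
On `V` the equation solves for `log det Hess φ` as `z ↦ ⟨c, z⟩ - ⟨b, ∇φ(z)⟩ - κ`, so it suffices
to differentiate the right-hand side along `b`: the linear term gives `⟨c, b⟩`, and the
derivative of `⟨b, ∇φ⟩ = Dφ · b` along `b` is `D²φ(b, b) = ⟨Hess φ b, b⟩`.
-/

open Filter Topology

theorem dotProduct_map_single {ι R F : Type*} [Fintype ι] [DecidableEq ι] [CommSemiring R]
    [FunLike F (ι → R) R] [LinearMapClass F R (ι → R) R] (f : F) (v : ι → R) :
    v ⬝ᵥ (fun i => f (Pi.single i 1)) = f v := by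
  conv_rhs => rw [← Finset.univ_sum_single v]
  simp only [map_sum, dotProduct]
  refine Finset.sum_congr rfl fun i _ => ?_
  rw [← smul_eq_mul, ← map_smul, ← Pi.single_smul', smul_eq_mul, mul_one]

variable {n : ℕ}

theorem dotProduct_grad (u : (Fin n → ℝ) → ℝ) (x v : Fin n → ℝ) :
    v ⬝ᵥ grad u x = fderiv ℝ u x v :=
  dotProduct_map_single (fderiv ℝ u x) v

variable {u : (Fin n → ℝ) → ℝ} {x : Fin n → ℝ}

theorem hess_apply (hd : DifferentiableAt ℝ (fderiv ℝ u) x) (i j : Fin n) :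
    hess u x i j = fderiv ℝ (fderiv ℝ u) x (Pi.single i 1) (Pi.single j 1) := by
  rw [hess, fderiv_clm_apply hd (differentiableAt_const _)]
  simp

theorem hess_mulVec_dotProduct (hd : DifferentiableAt ℝ (fderiv ℝ u) x) (v w : Fin n → ℝ) :
    hess u x *ᵥ v ⬝ᵥ w = fderiv ℝ (fderiv ℝ u) x w v := by
  have hrow : hess u x *ᵥ v = fun i => fderiv ℝ (fderiv ℝ u) x (Pi.single i 1) v := by
    ext i
    rw [mulVec, dotProduct_comm]
    simp only [hess_apply hd]
    exact dotProduct_map_single _ v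
  rw [hrow, dotProduct_comm]
  exact dotProduct_map_single ((fderiv ℝ (fderiv ℝ u) x).flip v) w

theorem hasLineDerivAt_dotProduct (c x v : Fin n → ℝ) :
    HasLineDerivAt ℝ (fun z => c ⬝ᵥ z) (c ⬝ᵥ v) x v := by
  have : HasDerivAt (fun t : ℝ => c ⬝ᵥ x + t * c ⬝ᵥ v) (c ⬝ᵥ v) 0 := by
    simpa using ((hasDerivAt_id (0 : ℝ)).mul_const (c ⬝ᵥ v)).const_add (c ⬝ᵥ x)
  simpa [HasLineDerivAt, dotProduct_add, dotProduct_smul] using this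

theorem hasLineDerivAt_dotProduct_grad (hd : DifferentiableAt ℝ (fderiv ℝ u) x)
    (v w : Fin n → ℝ) :
    HasLineDerivAt ℝ (fun z => w ⬝ᵥ grad u z) (hess u x *ᵥ w ⬝ᵥ v) x v := by
  simp_rw [dotProduct_grad, hess_mulVec_dotProduct hd]
  simpa using (hd.hasFDerivAt.clm_apply (hasFDerivAt_const w x)).hasLineDerivAt v

theorem stmt13_general {n : ℕ} (V : Set (Fin n → ℝ)) (hV : IsOpen V)
    (φ : (Fin n → ℝ) → ℝ) (hφ : ContDiffOn ℝ 2 φ V)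
    (b c : Fin n → ℝ) (κ : ℝ)
    (hMA : ∀ y ∈ V, c ⬝ᵥ y = b ⬝ᵥ grad φ y + Real.log (hess φ y).det + κ) :
    ∀ y ∈ V, HasLineDerivAt ℝ (fun z => Real.log (hess φ z).det)
      (b ⬝ᵥ c - (hess φ y).mulVec b ⬝ᵥ b) y b := by
  intro y hy
  have hd : DifferentiableAt ℝ (fderiv ℝ φ) y :=
    ((hφ.fderiv_of_isOpen hV le_rfl).differentiableOn one_ne_zero).differentiableAt
      (hV.mem_nhds hy)
  have hsolve : (fun z => Real.log (hess φ z).det) =ᶠ[𝓝 y]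
      fun z => c ⬝ᵥ z - b ⬝ᵥ grad φ z - κ :=
    eventually_of_mem (hV.mem_nhds hy) fun z hz => by linarith [hMA z hz]
  rw [hsolve.hasLineDerivAt_iff, dotProduct_comm b c]
  -- `HasLineDerivAt` unfolds to a `HasDerivAt` along `t ↦ y + t • b`, whose `sub` lemmas apply.
  exact ((hasLineDerivAt_dotProduct c y b).sub
    (hasLineDerivAt_dotProduct_grad hd b b)).sub_const κ

/-- If `φ` is `C²` with positive definite Hessian on the open set `V` and satisfies the steady
Kähler–Ricci soliton Monge–Ampère equation
`⟨c, y⟩ = ⟨b, ∇φ(y)⟩ + log det Hess φ(y) + κ` on `V`, then `y ↦ log det Hess φ(y)` has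
directional derivative `⟨b, c⟩ − ⟨Hess φ(y) b, b⟩` in the direction `b` at every `y ∈ V`. -/
theorem stmt13 {n : ℕ} (V : Set (Fin n → ℝ)) (hV : IsOpen V)
    (φ : (Fin n → ℝ) → ℝ) (hφ : ContDiffOn ℝ 2 φ V)
    (hpos : ∀ y ∈ V, (hess φ y).PosDef)
    (b c : Fin n → ℝ) (κ : ℝ)
    (hMA : ∀ y ∈ V, c ⬝ᵥ y = b ⬝ᵥ grad φ y + Real.log (hess φ y).det + κ) :
    ∀ y ∈ V, HasLineDerivAt ℝ (fun z => Real.log (hess φ z).det)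
      (b ⬝ᵥ c - (hess φ y).mulVec b ⬝ᵥ b) y b :=
  stmt13_general V hV φ hφ b c κ hMA
end

section
/- Let P ⊆ ℝⁿ be a nonempty open convex set and let u : P → ℝ be a C² function whose Hessian Hess u(x) is positive definite at every point x ∈ P. Suppose the gradient map ∇u : P → ℝⁿ is proper, i.e. the preimage under ∇u of every compact subset of ℝⁿ is a compact subset of P (equivalently, ‖∇u(x_k)‖ → ∞ along every sequence (x_k) in P that eventually leaves every compact subset of P). Then ∇u maps P bijectively onto ℝⁿ. -/
/-
The gradient `∇u` is injective on the convex set `P`: along the segment from `a` to `b`, the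
derivative of `t ↦ ⟪b - a, ∇u(a + t (b - a))⟫` is the Hessian quadratic form at `b - a`, which
is positive, so this function is strictly increasing and `∇u a ≠ ∇u b`. Its image is open by the
inverse function theorem, and closed because `∇u` is proper. Being nonempty and clopen in the
connected space `ℝⁿ`, the image is all of `ℝⁿ`.
-/

open Matrix

section

variable {𝕜 E Y : Type*}

theorem isClosed_image_of_isCompact_preimage [TopologicalSpace E] [TopologicalSpace Y]
    [T2Space Y] [WeaklyLocallyCompactSpace Y] {f : E → Y} {P : Set E} (hf : ContinuousOn f P)
    (hproper : ∀ K : Set Y, IsCompact K → IsCompact {x ∈ P | f x ∈ K}) :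
    IsClosed (f '' P) := by
  refine closure_subset_iff_isClosed.mp fun y hy => ?_
  obtain ⟨K, hK, hKy⟩ := exists_compact_mem_nhds y
  have hcompact : IsCompact (f '' {x ∈ P | f x ∈ K}) :=
    (hproper K hK).image_of_continuousOn (hf.mono fun x hx => hx.1)
  have hy' : y ∈ closure (f '' {x ∈ P | f x ∈ K}) := by
    refine mem_closure_iff_nhds.mpr fun t ht => ?_
    obtain ⟨_, ⟨hzt, hzK⟩, x, hx, rfl⟩ :=
      mem_closure_iff_nhds.mp hy (t ∩ K) (Filter.inter_mem ht hKy)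
    exact ⟨f x, hzt, x, ⟨hx, hzK⟩, rfl⟩
  rw [hcompact.isClosed.closure_eq] at hy'
  exact Set.image_mono (fun x hx => hx.1) hy'

theorem IsOpen.isOpen_image_of_hasStrictFDerivAt [NontriviallyNormedField 𝕜] [CompleteSpace 𝕜]
    [NormedAddCommGroup E] [NormedSpace 𝕜 E] [FiniteDimensional 𝕜 E] {f : E → E}
    {f' : E → E →L[𝕜] E} {P : Set E} (hP : IsOpen P)
    (hf : ∀ x ∈ P, HasStrictFDerivAt f (f' x) x)
    (hinj : ∀ x ∈ P, Function.Injective (f' x)) :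
    IsOpen (f '' P) := by
  have : CompleteSpace E := FiniteDimensional.complete 𝕜 E
  refine isOpen_iff_mem_nhds.mpr ?_
  rintro _ ⟨x, hx, rfl⟩
  let e : E ≃L[𝕜] E :=
    (LinearEquiv.ofInjectiveEndo (f' x : E →ₗ[𝕜] E) (hinj x hx)).toContinuousLinearEquiv
  have he : HasStrictFDerivAt f (e : E →L[𝕜] E) x := hf x hx
  rw [← he.map_nhds_eq_of_equiv]
  exact Filter.image_mem_map (hP.mem_nhds hx)

end

theorem Convex.injOn_of_dotProduct_hasFDerivAt_pos {ι : Type*} [Fintype ι]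
    {f : (ι → ℝ) → ι → ℝ} {f' : (ι → ℝ) → (ι → ℝ) →L[ℝ] ι → ℝ} {P : Set (ι → ℝ)}
    (hP : Convex ℝ P) (hf : ∀ x ∈ P, HasFDerivAt f (f' x) x)
    (hpos : ∀ x ∈ P, ∀ v ≠ 0, 0 < v ⬝ᵥ f' x v) :
    Set.InjOn f P := by
  intro a ha b hb hab
  by_contra hne
  set d := b - a
  have hd : d ≠ 0 := sub_ne_zero.mpr (Ne.symm hne)
  have hseg : ∀ t ∈ Set.Icc (0 : ℝ) 1, a + t • d ∈ P :=
    fun t ht => hP.add_smul_sub_mem ha hb ht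
  let φ : ℝ → ℝ := fun t => d ⬝ᵥ f (a + t • d)
  have hφ : ∀ t ∈ Set.Icc (0 : ℝ) 1, HasDerivAt φ (d ⬝ᵥ f' (a + t • d) d) t := by
    intro t ht
    have hline : HasDerivAt (fun t : ℝ => a + t • d) d t := by
      simpa using ((hasDerivAt_id t).smul_const d).const_add a
    exact (LinearMap.toContinuousLinearMap (dotProductBilin ℝ ℝ d)).hasFDerivAt.comp_hasDerivAt t
      ((hf _ (hseg t ht)).comp_hasDerivAt t hline)
  have hmono : StrictMonoOn φ (Set.Icc 0 1) :=
    strictMonoOn_of_hasDerivWithinAt_pos (convex_Icc 0 1)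
      (fun t ht => (hφ t ht).continuousAt.continuousWithinAt)
      (fun t ht => (hφ t (interior_subset ht)).hasDerivWithinAt)
      (fun t ht => hpos _ (hseg t (interior_subset ht)) d hd)
  have := hmono (Set.left_mem_Icc.mpr zero_le_one) (Set.right_mem_Icc.mpr zero_le_one) zero_lt_one
  simp [φ, d, hab] at this

theorem injective_of_dotProduct_pos {ι : Type*} [Fintype ι] {A : (ι → ℝ) →L[ℝ] ι → ℝ}
    (hA : ∀ v ≠ 0, 0 < v ⬝ᵥ A v) : Function.Injective A :=
  (injective_iff_map_eq_zero A).mpr fun v hv =>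
    by_contra fun hv₀ => by simpa [hv] using hA v hv₀

variable {n : ℕ}

theorem hess_eq_fderiv_fderiv {u : (Fin n → ℝ) → ℝ} {x : Fin n → ℝ}
    (hu : DifferentiableAt ℝ (fderiv ℝ u) x) (i j : Fin n) :
    hess u x i j = fderiv ℝ (fderiv ℝ u) x (Pi.single i 1) (Pi.single j 1) := by
  have h := (ContinuousLinearMap.apply ℝ ℝ (Pi.single j 1 : Fin n → ℝ)).hasFDerivAt.comp x
    hu.hasFDerivAt
  exact congrArg (· (Pi.single i 1)) h.fderiv

theorem hasStrictFDerivAt_grad {P : Set (Fin n → ℝ)} {u : (Fin n → ℝ) → ℝ} (hP : IsOpen P)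
    (hu : ContDiffOn ℝ 2 u P) {x : Fin n → ℝ} (hx : x ∈ P) :
    HasStrictFDerivAt (grad u) (toLin' (hess u x)ᵀ).toContinuousLinearMap x := by
  let L : ((Fin n → ℝ) →L[ℝ] ℝ) →L[ℝ] Fin n → ℝ :=
    ContinuousLinearMap.pi fun i => ContinuousLinearMap.apply ℝ ℝ (Pi.single i 1)
  have hC1 : ContDiffOn ℝ 1 (fderiv ℝ u) P := hu.fderiv_of_isOpen hP (by norm_num)
  have hD : DifferentiableAt ℝ (fderiv ℝ u) x :=
    (hC1.differentiableOn one_ne_zero).differentiableAt (hP.mem_nhds hx)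
  have hL : L.comp (fderiv ℝ (fderiv ℝ u) x) = (toLin' (hess u x)ᵀ).toContinuousLinearMap := by
    refine ContinuousLinearMap.coe_injective <| LinearMap.pi_ext fun j c => funext fun i => ?_
    rw [← mul_one c, ← smul_eq_mul, Pi.single_smul']
    simp [L, hess_eq_fderiv_fderiv hD, mulVec_single]
  rw [← hL]
  exact ((L.contDiff.comp_contDiffOn hC1).contDiffAt (hP.mem_nhds hx)).hasStrictFDerivAt'
    (L.hasFDerivAt.comp x hD.hasFDerivAt) one_ne_zero

/-- If `u` is `C²` with positive definite Hessian on a nonempty open convex set `P ⊆ ℝⁿ`, and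
the gradient map `∇u` is proper as a map `P → ℝⁿ` (the preimage in `P` of every compact set is
compact), then `∇u` maps `P` bijectively onto `ℝⁿ`. -/
theorem stmt14 {n : ℕ} (P : Set (Fin n → ℝ)) (hne : P.Nonempty) (hP : IsOpen P)
    (hconv : Convex ℝ P)
    (u : (Fin n → ℝ) → ℝ) (hu : ContDiffOn ℝ 2 u P)
    (hpos : ∀ x ∈ P, (hess u x).PosDef)
    (hproper : ∀ K : Set (Fin n → ℝ), IsCompact K → IsCompact {x ∈ P | grad u x ∈ K}) :
    Set.BijOn (grad u) P Set.univ := by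
  have hgrad : ∀ x ∈ P, HasStrictFDerivAt (grad u) (toLin' (hess u x)ᵀ).toContinuousLinearMap x :=
    fun x hx => hasStrictFDerivAt_grad hP hu hx
  have hderivPos : ∀ x ∈ P, ∀ v ≠ 0,
      0 < v ⬝ᵥ (toLin' (hess u x)ᵀ).toContinuousLinearMap v := fun x hx v hv => by
    have hsymm : (hess u x)ᵀ = hess u x := (hpos x hx).isHermitian.eq
    simpa [hsymm] using (hpos x hx).dotProduct_mulVec_pos hv
  have hinj : Set.InjOn (grad u) P :=
    hconv.injOn_of_dotProduct_hasFDerivAt_pos (fun x hx => (hgrad x hx).hasFDerivAt) hderivPos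
  have hopen : IsOpen (grad u '' P) :=
    hP.isOpen_image_of_hasStrictFDerivAt hgrad
      fun x hx => injective_of_dotProduct_pos (hderivPos x hx)
  have hclosed : IsClosed (grad u '' P) :=
    isClosed_image_of_isCompact_preimage
      (fun x hx => (hgrad x hx).continuousAt.continuousWithinAt) hproper
  refine ⟨Set.mapsTo_univ _ _, hinj, ?_⟩
  rw [Set.SurjOn, IsClopen.eq_univ ⟨hclosed, hopen⟩ (hne.image _)]
end
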